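/- arXiv:1002.4463 — 6 statements merged into one kernel-verified Lean document; each statement's English description precedes it below -/
import Mathlib

section
/- Let n1, n2, n2', n3, n3', n4, n5, m1, m1', m2, m3, m4, m4', m5 be natural numbers such that in ℤ^4 one has n1·s1 + (n2 − n2')·s2 + (n3 − n3')·s3 + n4·s4 + n5·s5 = (m1 − m1')·s1 + m2·s2 + m3·s3 + (m4 − m4')·s4 + m5·s5 (here the differences are taken in ℤ and the equation holds coordinatewise). Assume that s12 and s42 are not both zero, and that s24 and s34 are not both zero. Then at least one of the four integers n2 − n2', n3 − n3', m1 − m1', m4 − m4' is nonnegative. (Claim 1 in the proof of Lemma 3.5, the case m = 4.) -/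
/-!
Read the equation in the second and fourth coordinates. In the fourth, the negative coefficients
`n2 - n2'`, `n3 - n3'` of `s24, s34` must be compensated by `n5 • s5`, forcing `m5 < n5`; in the
second, the negative coefficients `m1 - m1'`, `m4 - m4'` of `s12, s42` force `n5 < m5` in the same way.
-/

theorem lt_of_neg_combination_eq {a b c d p q k l w : ℤ} (ha : a < 0) (hb : b < 0)
    (hc : 0 ≤ c) (hd : 0 ≤ d) (hp : 0 ≤ p) (hq : 0 ≤ q) (hpq : 0 < p + q) (hw : 0 ≤ w)
    (h : a * p + b * q + k * w = c * p + d * q + l * w) : l < k := by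
  have hneg : a * p + b * q < 0 := by nlinarith
  have hlt : l * w < k * w := by nlinarith [mul_nonneg hc hp, mul_nonneg hd hq]
  exact lt_of_mul_lt_mul_right hlt hw

/-- Claim 1 in the proof of Lemma 3.5 (the case `m = 4`).

Generators in `ℤ^4` (Hochster-transformed form):
`s1 = (0, s12, s13, 0)`, `s2 = (0, 0, s23, s24)`, `s3 = (s31, 0, 0, s34)`,
`s4 = (s41, s42, 0, 0)`, and `s5 ∈ ℤ^4` with all coordinates nonnegative.
If
`n1·s1 + (n2 − n2')·s2 + (n3 − n3')·s3 + n4·s4 + n5·s5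
  = (m1 − m1')·s1 + m2·s2 + m3·s3 + (m4 − m4')·s4 + m5·s5`,
`s12, s42` not both zero and `s24, s34` not both zero, then at least one of
`n2 − n2'`, `n3 − n3'`, `m1 − m1'`, `m4 − m4'` is nonnegative. -/
theorem stmt0 (s12 s13 s23 s24 s31 s34 s41 s42 : ℕ)
    (s5 : Fin 4 → ℤ) (hs5 : ∀ i, 0 ≤ s5 i)
    (s1 s2 s3 s4 : Fin 4 → ℤ)
    (hs1 : s1 = ![0, (s12 : ℤ), (s13 : ℤ), 0])
    (hs2 : s2 = ![0, 0, (s23 : ℤ), (s24 : ℤ)])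
    (hs3 : s3 = ![(s31 : ℤ), 0, 0, (s34 : ℤ)])
    (hs4 : s4 = ![(s41 : ℤ), (s42 : ℤ), 0, 0])
    (h2 : ¬ (s12 = 0 ∧ s42 = 0)) (h4 : ¬ (s24 = 0 ∧ s34 = 0))
    (n1 n2 n2' n3 n3' n4 n5 m1 m1' m2 m3 m4 m4' m5 : ℕ)
    (heq : (n1 : ℤ) • s1 + ((n2 : ℤ) - (n2' : ℤ)) • s2 + ((n3 : ℤ) - (n3' : ℤ)) • s3
            + (n4 : ℤ) • s4 + (n5 : ℤ) • s5
          = ((m1 : ℤ) - (m1' : ℤ)) • s1 + (m2 : ℤ) • s2 + (m3 : ℤ) • s3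
            + ((m4 : ℤ) - (m4' : ℤ)) • s4 + (m5 : ℤ) • s5) :
    0 ≤ (n2 : ℤ) - (n2' : ℤ) ∨ 0 ≤ (n3 : ℤ) - (n3' : ℤ)
      ∨ 0 ≤ (m1 : ℤ) - (m1' : ℤ) ∨ 0 ≤ (m4 : ℤ) - (m4' : ℤ) := by
  by_contra! hneg
  obtain ⟨hn2, hn3, hm1, hm4⟩ := hneg
  have e1 := congrFun heq 1
  have e3 := congrFun heq 3
  simp only [hs1, hs2, hs3, hs4, Pi.add_apply, Pi.smul_apply, smul_eq_mul, Matrix.cons_val,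
    mul_zero, add_zero, zero_add] at e1 e3
  have hm5 : m5 < n5 := by
    exact_mod_cast lt_of_neg_combination_eq hn2 hn3 (Nat.cast_nonneg m2) (Nat.cast_nonneg m3)
      (Nat.cast_nonneg s24) (Nat.cast_nonneg s34) (by omega) (hs5 3) e3
  have hn5 : n5 < m5 := by
    exact_mod_cast lt_of_neg_combination_eq hm1 hm4 (Nat.cast_nonneg n1) (Nat.cast_nonneg n4)
      (Nat.cast_nonneg s12) (Nat.cast_nonneg s42) (by omega) (hs5 1) e1.symm
  omega
end

section
/- S_2 ∩ S_4 ⊆ S_1 ∪ S_3; equivalently, the set G_{{1,3}} = (S_2 ∩ S_4) \ (S_1 ∪ S_3) is empty. (The assertion G_{13} = ∅ proved in Lemma 3.5, the case m = 4.) -/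
/-!
If the generators of `S` have nonnegative coordinates, then `S ∩ F_i` is generated by the
generators lying in `F_i`, so `S_i` consists of the integer combinations `∑ c_j s_j` whose
coefficients are nonnegative at every generator outside `F_i`. Here the generators in `F_k`
are `s_k` and `s_{k+1}` (indices mod 4).

Take `x = ∑ c_j s_j ∈ S_2` and `x = ∑ d_j s_j ∈ S_4`. If `c_2 ≥ 0` or `d_1 ≥ 0` then `x ∈ S_3`,
and if `c_3 ≥ 0` or `d_4 ≥ 0` then `x ∈ S_1`. Otherwise `c_1 > d_1` and `c_4 > d_4`, so
comparing second coordinates forces `c_5 < d_5`; symmetrically `d_2 > c_2` and `d_3 > c_3`,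
so comparing fourth coordinates forces `d_5 < c_5`.
-/

/-- For a submonoid `S` of `ℤ^n` and a coordinate `i`, the paper's set
`S_i = S − S_{(i)}`, where `S_{(i)}`-differences are taken against the subgroup `H_i`
generated by `S ∩ F_i` with `F_i = {x : x_i = 0}`. -/
def paperSi {n : ℕ} (S : AddSubmonoid (Fin n → ℤ)) (i : Fin n) : Set (Fin n → ℤ) :=
  {x | ∃ s ∈ S, ∃ t ∈ AddSubgroup.closure {y : Fin n → ℤ | y ∈ S ∧ y i = 0}, x = s - t}

open Finset

section
variable {κ ι : Type*} [Fintype ι] {g : ι → κ → ℤ} {i : κ}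

lemma exists_nat_coeffs_of_mem_closure_range_of_apply_eq_zero (hg : ∀ j, 0 ≤ g j i)
    {y : κ → ℤ} (hy : y ∈ AddSubmonoid.closure (Set.range g)) (hyi : y i = 0) :
    ∃ c : ι → ℕ, (∀ j, g j i ≠ 0 → c j = 0) ∧ y = ∑ j, c j • g j := by
  obtain ⟨c, rfl⟩ := AddSubmonoid.mem_closure_range_iff_of_fintype.mp hy
  refine ⟨c, fun j hj => ?_, rfl⟩
  have hterms : ∀ j ∈ univ, 0 ≤ (c j : ℤ) * g j i :=
    fun j _ => mul_nonneg (Int.natCast_nonneg _) (hg j)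
  have hj0 := (sum_eq_zero_iff_of_nonneg hterms).mp (by simpa [Finset.sum_apply] using hyi) j (mem_univ j)
  simpa [hj] using hj0

lemma exists_int_coeffs_of_mem_closure_setOf_apply_eq_zero (hg : ∀ j, 0 ≤ g j i)
    {t : κ → ℤ}
    (ht : t ∈ AddSubgroup.closure {y | y ∈ AddSubmonoid.closure (Set.range g) ∧ y i = 0}) :
    ∃ c : ι → ℤ, (∀ j, g j i ≠ 0 → c j = 0) ∧ t = ∑ j, c j • g j := by
  induction ht using AddSubgroup.closure_induction with
  | mem y hy =>
    obtain ⟨c, hc, rfl⟩ := exists_nat_coeffs_of_mem_closure_range_of_apply_eq_zero hg hy.1 hy.2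
    exact ⟨fun j => c j, fun j hj => by simp [hc j hj], by simp⟩
  | zero => exact ⟨0, fun _ _ => rfl, by simp⟩
  | add y z _ _ hy hz =>
    obtain ⟨a, ha, rfl⟩ := hy
    obtain ⟨b, hb, rfl⟩ := hz
    exact ⟨a + b, fun j hj => by simp [ha j hj, hb j hj], by simp [add_smul, sum_add_distrib]⟩
  | neg y _ hy =>
    obtain ⟨a, ha, rfl⟩ := hy
    exact ⟨-a, fun j hj => by simp [ha j hj], by simp⟩

end

theorem mem_paperSi_closure_range_iff {n : ℕ} {ι : Type*} [Fintype ι] {g : ι → Fin n → ℤ}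
    {i : Fin n} (hg : ∀ j, 0 ≤ g j i) {x : Fin n → ℤ} :
    x ∈ paperSi (AddSubmonoid.closure (Set.range g)) i ↔
      ∃ c : ι → ℤ, (∀ j, g j i ≠ 0 → 0 ≤ c j) ∧ x = ∑ j, c j • g j := by
  constructor
  · rintro ⟨s, hs, t, ht, rfl⟩
    obtain ⟨a, rfl⟩ := AddSubmonoid.mem_closure_range_iff_of_fintype.mp hs
    obtain ⟨b, hb, rfl⟩ := exists_int_coeffs_of_mem_closure_setOf_apply_eq_zero hg ht
    exact ⟨fun j => a j - b j, fun j hj => by simp [hb j hj], by simp [sub_smul, sum_sub_distrib]⟩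
  · rintro ⟨c, hc, rfl⟩
    refine ⟨∑ j with ¬g j i = 0, c j • g j, sum_mem fun j hj => ?_,
      -∑ j with g j i = 0, c j • g j, neg_mem (sum_mem fun j hj => ?_), ?_⟩
    · lift c j to ℕ using hc j (mem_filter.mp hj).2 with m
      rw [natCast_zsmul]
      exact nsmul_mem (AddSubmonoid.subset_closure (Set.mem_range_self j)) m
    · refine AddSubgroup.zsmul_mem _ (AddSubgroup.subset_closure ?_) _
      exact ⟨AddSubmonoid.subset_closure (Set.mem_range_self j), (mem_filter.mp hj).2⟩
    · rw [sub_neg_eq_add, add_comm, sum_filter_add_sum_filter_not]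

lemma lt_of_add_add_eq_add_add {a b q x y z x' y' z' : ℤ} (ha : 0 < a) (hb : 0 < b)
    (hq : 0 < q) (hx : x' < x) (hy : y' < y)
    (h : x * a + y * b + z * q = x' * a + y' * b + z' * q) : z < z' := by
  nlinarith [mul_lt_mul_of_pos_right hx ha, mul_lt_mul_of_pos_right hy hb]

/-- Coordinates `1, 2, 3, 4` of the paper are the indices `0, 1, 2, 3` of `Fin 4`. -/
theorem stmt1 (s12 s13 s23 s24 s31 s34 s41 s42 : ℕ)
    (hpos : 0 < s12 ∧ 0 < s13 ∧ 0 < s23 ∧ 0 < s24 ∧ 0 < s31 ∧ 0 < s34 ∧ 0 < s41 ∧ 0 < s42)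
    (s5 : Fin 4 → ℤ) (hs5 : ∀ i, 0 < s5 i)
    (s1 s2 s3 s4 : Fin 4 → ℤ)
    (hs1 : s1 = ![0, (s12 : ℤ), (s13 : ℤ), 0])
    (hs2 : s2 = ![0, 0, (s23 : ℤ), (s24 : ℤ)])
    (hs3 : s3 = ![(s31 : ℤ), 0, 0, (s34 : ℤ)])
    (hs4 : s4 = ![(s41 : ℤ), (s42 : ℤ), 0, 0])
    (S : AddSubmonoid (Fin 4 → ℤ))
    (hS : S = AddSubmonoid.closure {s1, s2, s3, s4, s5}) :
    (paperSi S 1 ∩ paperSi S 3 ⊆ paperSi S 0 ∪ paperSi S 2) ∧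
      (paperSi S 1 ∩ paperSi S 3) \ (paperSi S 0 ∪ paperSi S 2) = ∅ := by
  obtain ⟨h12, -, -, h24, -, h34, -, h42⟩ := hpos
  set g : Fin 5 → Fin 4 → ℤ := ![s1, s2, s3, s4, s5]
  have hcoeff (i : Fin 4) (x : Fin 4 → ℤ) :
      x ∈ paperSi S i ↔ ∃ c : Fin 5 → ℤ, (∀ j, g j i ≠ 0 → 0 ≤ c j) ∧ x = ∑ j, c j • g j := by
    have hg (j : Fin 5) : 0 ≤ g j i := by
      fin_cases j <;> fin_cases i <;> simp [g, hs1, hs2, hs3, hs4, (hs5 _).le]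
    rw [hS, ← mem_paperSi_closure_range_iff hg]
    simp only [g, Matrix.range_cons, Matrix.range_empty, Set.union_empty, Set.singleton_union]
  have mem0 (e : Fin 5 → ℤ) (h2 : 0 ≤ e 2) (h3 : 0 ≤ e 3) (h4 : 0 ≤ e 4) :
      ∑ j, e j • g j ∈ paperSi S 0 :=
    (hcoeff 0 _).2 ⟨e, fun j hj => by
      fin_cases j <;> simp [g, hs1, hs2, hs3, hs4] at hj ⊢ <;> assumption, rfl⟩
  have mem2 (e : Fin 5 → ℤ) (h0 : 0 ≤ e 0) (h1 : 0 ≤ e 1) (h4 : 0 ≤ e 4) :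
      ∑ j, e j • g j ∈ paperSi S 2 :=
    (hcoeff 2 _).2 ⟨e, fun j hj => by
      fin_cases j <;> simp [g, hs1, hs2, hs3, hs4] at hj ⊢ <;> assumption, rfl⟩
  have key : paperSi S 1 ∩ paperSi S 3 ⊆ paperSi S 0 ∪ paperSi S 2 := by
    rintro x ⟨hx1, hx3⟩
    obtain ⟨c, hc, rfl⟩ := (hcoeff 1 _).1 hx1
    obtain ⟨d, hd, hcd⟩ := (hcoeff 3 _).1 hx3
    simp [Fin.forall_fin_succ, g, hs1, hs2, hs3, hs4, h12.ne', h24.ne', h34.ne', h42.ne',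
      (hs5 _).ne'] at hc hd
    by_contra hx
    have hc1 : c 1 < 0 := lt_of_not_ge fun h => hx (.inr (mem2 c hc.1 h hc.2.2))
    have hc2 : c 2 < 0 := lt_of_not_ge fun h => hx (.inl (mem0 c h hc.2.1 hc.2.2))
    have hd0 : d 0 < 0 := lt_of_not_ge fun h => hx (hcd ▸ .inr (mem2 d h hd.1 hd.2.2))
    have hd3 : d 3 < 0 := lt_of_not_ge fun h => hx (hcd ▸ .inl (mem0 d hd.2.1 h hd.2.2))
    have e1 := congrFun hcd 1
    have e3 := congrFun hcd 3
    simp [Fin.sum_univ_five, g, hs1, hs2, hs3, hs4] at e1 e3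
    have h5 : c 4 < d 4 := lt_of_add_add_eq_add_add (by positivity) (by positivity) (hs5 1)
      (by omega) (by omega) e1
    exact h5.not_gt (lt_of_add_add_eq_add_add (by positivity) (by positivity) (hs5 3)
      (by omega) (by omega) e3.symm)
  exact ⟨key, Set.sdiff_eq_empty.mpr key⟩
end

section
/- S_1 ∩ S_3 ⊆ S_2 ∪ S_4; equivalently, the set G_{{2,4}} = (S_1 ∩ S_3) \ (S_2 ∪ S_4) is empty. (The assertion G_{24} = ∅ in Lemma 3.5, the case m = 4.) -/
open Finset

def NonnegOffFace {ι : Type*} {n : ℕ} (g : ι → Fin n → ℤ) (i : Fin n) (c : ι → ℤ) : Prop :=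
  ∀ k, g k i ≠ 0 → 0 ≤ c k

section
variable {ι : Type*} [Fintype ι] {n : ℕ} {g : ι → Fin n → ℤ} {i : Fin n}

theorem mem_closure_range_iff_exists_sum {x : Fin n → ℤ} :
    x ∈ AddSubmonoid.closure (Set.range g) ↔ ∃ c : ι → ℕ, ∑ k, c k • g k = x := by
  rw [← Submodule.span_nat_eq_addSubmonoidClosure, Submodule.mem_toAddSubmonoid,
    Submodule.mem_span_range_iff_exists_fun]

theorem mem_span_face_of_mem_closure_range (hg : ∀ k, 0 ≤ g k i) {y : Fin n → ℤ}
    (hy : y ∈ AddSubmonoid.closure (Set.range g)) (hyi : y i = 0) :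
    y ∈ Submodule.span ℤ (g '' {k | g k i = 0}) := by
  obtain ⟨c, rfl⟩ := mem_closure_range_iff_exists_sum.1 hy
  have hterm : ∀ k ∈ univ, c k • g k i = 0 :=
    (sum_eq_zero_iff_of_nonneg fun k _ ↦ smul_nonneg (Nat.zero_le _) (hg k)).1 <| by
      simpa [Finset.sum_apply] using hyi
  refine Submodule.sum_mem _ fun k _ ↦ ?_
  rw [← natCast_zsmul]
  rcases smul_eq_zero.1 (hterm k (mem_univ k)) with hck | hgk
  · simp [hck]
  · exact Submodule.smul_mem _ _ (Submodule.subset_span ⟨k, hgk, rfl⟩)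

theorem exists_sum_of_mem_span_face {t : Fin n → ℤ}
    (ht : t ∈ Submodule.span ℤ (g '' {k | g k i = 0})) :
    ∃ c : ι → ℤ, (∀ k, g k i ≠ 0 → c k = 0) ∧ ∑ k, c k • g k = t := by
  obtain ⟨l, hl, rfl⟩ := (Finsupp.mem_span_image_iff_linearCombination ℤ).1 ht
  refine ⟨l, fun k hk ↦ (Finsupp.mem_supported' ℤ l).1 hl k hk, ?_⟩
  rw [Finsupp.linearCombination_apply]
  exact (Finsupp.sum_fintype _ (fun k a ↦ a • g k) fun k ↦ zero_smul ℤ (g k)).symm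

theorem sum_mem_paperSi_of_nonnegOffFace {c : ι → ℤ} (hc : NonnegOffFace g i c) :
    ∑ k, c k • g k ∈ paperSi (AddSubmonoid.closure (Set.range g)) i := by
  have hgS : ∀ k, g k ∈ AddSubmonoid.closure (Set.range g) :=
    fun k ↦ AddSubmonoid.subset_closure (Set.mem_range_self k)
  -- split `c` into positive and negative parts; the negative part is supported on the face
  refine ⟨∑ k, (c k).toNat • g k,
    AddSubmonoid.sum_mem _ fun k _ ↦ AddSubmonoid.nsmul_mem _ (hgS k) _,
    ∑ k, (-c k).toNat • g k, AddSubgroup.sum_mem _ fun k _ ↦ ?_, ?_⟩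
  · by_cases hk : g k i = 0
    · exact AddSubgroup.nsmul_mem _
        (AddSubgroup.subset_closure (show g k ∈ {y | y ∈ _ ∧ y i = 0} from ⟨hgS k, hk⟩)) _
    · simp [Int.toNat_eq_zero.2 (neg_nonpos.2 (hc k hk))]
  · rw [← sum_sub_distrib]
    refine sum_congr rfl fun k _ ↦ ?_
    rw [← natCast_zsmul, ← natCast_zsmul, ← sub_smul, Int.toNat_sub_toNat_neg]

theorem exists_nonnegOffFace_of_mem_paperSi (hg : ∀ k, 0 ≤ g k i) {x : Fin n → ℤ}
    (hx : x ∈ paperSi (AddSubmonoid.closure (Set.range g)) i) :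
    ∃ c : ι → ℤ, NonnegOffFace g i c ∧ ∑ k, c k • g k = x := by
  obtain ⟨s, hs, t, ht, rfl⟩ := hx
  obtain ⟨a, rfl⟩ := mem_closure_range_iff_exists_sum.1 hs
  have ht' : t ∈ Submodule.span ℤ (g '' {k | g k i = 0}) :=
    (AddSubgroup.closure_le (Submodule.span ℤ (g '' {k | g k i = 0})).toAddSubgroup).2
      (fun _ hy ↦ mem_span_face_of_mem_closure_range hg hy.1 hy.2) ht
  obtain ⟨b, hb, rfl⟩ := exists_sum_of_mem_span_face ht'
  refine ⟨fun k ↦ a k - b k, fun k hk ↦ by simp [hb k hk], ?_⟩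
  simp [sub_smul, sum_sub_distrib]

end

theorem nonneg_coeff_of_two_coord_eq {s13 s23 s31 s41 u0 u2 : ℤ} (h13 : 0 < s13) (h23 : 0 < s23)
    (h31 : 0 < s31) (h41 : 0 < s41) (hu0 : 0 < u0) (hu2 : 0 < u2)
    {a b γ δ ε A B C D E : ℤ} (hγ : 0 ≤ γ) (hδ : 0 ≤ δ) (hA : 0 ≤ A) (hB : 0 ≤ B)
    (h0 : γ * s31 + δ * s41 + ε * u0 = C * s31 + D * s41 + E * u0)
    (h2 : a * s13 + b * s23 + ε * u2 = A * s13 + B * s23 + E * u2) :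
    0 ≤ a ∨ 0 ≤ b ∨ 0 ≤ C ∨ 0 ≤ D := by
  by_contra! h
  obtain ⟨ha, hb, hC, hD⟩ := h
  have hεE : ε < E := by
    refine lt_of_mul_lt_mul_right ?_ hu0.le
    nlinarith [mul_nonneg hγ h31.le, mul_nonneg hδ h41.le, mul_neg_of_neg_of_pos hC h31,
      mul_neg_of_neg_of_pos hD h41]
  have hEε : E < ε := by
    refine lt_of_mul_lt_mul_right ?_ hu2.le
    nlinarith [mul_nonneg hA h13.le, mul_nonneg hB h23.le, mul_neg_of_neg_of_pos ha h13,
      mul_neg_of_neg_of_pos hb h23]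
  exact lt_asymm hεE hEε

def cyclicPairGens (s12 s13 s23 s24 s31 s34 s41 s42 : ℕ) (s5 : Fin 4 → ℤ) :
    Fin 5 → Fin 4 → ℤ :=
  ![![0, s12, s13, 0], ![0, 0, s23, s24], ![s31, 0, 0, s34], ![s41, s42, 0, 0], s5]

namespace cyclicPairGens

variable {s12 s13 s23 s24 s31 s34 s41 s42 : ℕ} {s5 : Fin 4 → ℤ} {c : Fin 5 → ℤ}

theorem nonneg_of_nonnegOffFace_zero (h31 : 0 < s31) (h41 : 0 < s41) (hu0 : 0 < s5 0)
    (hc : NonnegOffFace (cyclicPairGens s12 s13 s23 s24 s31 s34 s41 s42 s5) 0 c) :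
    0 ≤ c 2 ∧ 0 ≤ c 3 ∧ 0 ≤ c 4 := by
  simpa [NonnegOffFace, Fin.forall_fin_succ, cyclicPairGens, h31.ne', h41.ne', hu0.ne'] using hc

theorem nonneg_of_nonnegOffFace_two (h13 : 0 < s13) (h23 : 0 < s23) (hu2 : 0 < s5 2)
    (hc : NonnegOffFace (cyclicPairGens s12 s13 s23 s24 s31 s34 s41 s42 s5) 2 c) :
    0 ≤ c 0 ∧ 0 ≤ c 1 ∧ 0 ≤ c 4 := by
  simpa [NonnegOffFace, Fin.forall_fin_succ, cyclicPairGens, h13.ne', h23.ne', hu2.ne'] using hc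

theorem nonnegOffFace_one (h0 : 0 ≤ c 0) (h3 : 0 ≤ c 3) (h4 : 0 ≤ c 4) :
    NonnegOffFace (cyclicPairGens s12 s13 s23 s24 s31 s34 s41 s42 s5) 1 c := by
  intro k hk
  fin_cases k <;> simp_all [cyclicPairGens]

theorem nonnegOffFace_three (h1 : 0 ≤ c 1) (h2 : 0 ≤ c 2) (h4 : 0 ≤ c 4) :
    NonnegOffFace (cyclicPairGens s12 s13 s23 s24 s31 s34 s41 s42 s5) 3 c := by
  intro k hk
  fin_cases k <;> simp_all [cyclicPairGens]

theorem paperSi_zero_inter_two_subset {S : AddSubmonoid (Fin 4 → ℤ)}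
    (hS : S = .closure (Set.range (cyclicPairGens s12 s13 s23 s24 s31 s34 s41 s42 s5)))
    (h13 : 0 < s13) (h23 : 0 < s23) (h31 : 0 < s31) (h41 : 0 < s41)
    (hu0 : 0 < s5 0) (hu2 : 0 < s5 2) :
    paperSi S 0 ∩ paperSi S 2 ⊆ paperSi S 1 ∪ paperSi S 3 := by
  subst hS
  rintro x ⟨hx0, hx2⟩
  obtain ⟨c, hc, rfl⟩ := exists_nonnegOffFace_of_mem_paperSi
    (by intro k; fin_cases k <;> simp [cyclicPairGens, hu0.le]) hx0
  obtain ⟨c', hc', hcc'⟩ := exists_nonnegOffFace_of_mem_paperSi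
    (by intro k; fin_cases k <;> simp [cyclicPairGens, hu2.le]) hx2
  obtain ⟨hc2, hc3, hc4⟩ := nonneg_of_nonnegOffFace_zero h31 h41 hu0 hc
  obtain ⟨hc'0, hc'1, hc'4⟩ := nonneg_of_nonnegOffFace_two h13 h23 hu2 hc'
  have h0 : c 2 * s31 + c 3 * s41 + c 4 * s5 0 = c' 2 * s31 + c' 3 * s41 + c' 4 * s5 0 := by
    simpa [cyclicPairGens, Fin.sum_univ_five] using (congrFun hcc' 0).symm
  have h2 : c 0 * s13 + c 1 * s23 + c 4 * s5 2 = c' 0 * s13 + c' 1 * s23 + c' 4 * s5 2 := by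
    simpa [cyclicPairGens, Fin.sum_univ_five] using (congrFun hcc' 2).symm
  rcases nonneg_coeff_of_two_coord_eq (Int.natCast_pos.2 h13) (Int.natCast_pos.2 h23)
    (Int.natCast_pos.2 h31) (Int.natCast_pos.2 h41) hu0 hu2 hc2 hc3 hc'0 hc'1
    h0 h2 with h | h | h | h
  · exact .inl (sum_mem_paperSi_of_nonnegOffFace (nonnegOffFace_one h hc3 hc4))
  · exact .inr (sum_mem_paperSi_of_nonnegOffFace (nonnegOffFace_three h hc2 hc4))
  · exact hcc' ▸ .inr (sum_mem_paperSi_of_nonnegOffFace (nonnegOffFace_three hc'1 h hc'4))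
  · exact hcc' ▸ .inl (sum_mem_paperSi_of_nonnegOffFace (nonnegOffFace_one hc'0 h hc'4))

end cyclicPairGens

/-- The assertion `G_{24} = ∅` in Lemma 3.5 (the case `m = 4`): with the
Hochster-transformed generators `s1 = (0, s12, s13, 0)`, `s2 = (0, 0, s23, s24)`,
`s3 = (s31, 0, 0, s34)`, `s4 = (s41, s42, 0, 0)` and `s5` with all coordinates
positive, one has `S_1 ∩ S_3 ⊆ S_2 ∪ S_4`, i.e.
`G_{{2,4}} = (S_1 ∩ S_3) \ (S_2 ∪ S_4) = ∅`.
(Coordinates `1,2,3,4` of the paper correspond to the indices `0,1,2,3` of `Fin 4`.) -/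
theorem stmt2 (s12 s13 s23 s24 s31 s34 s41 s42 : ℕ)
    (hpos : 0 < s12 ∧ 0 < s13 ∧ 0 < s23 ∧ 0 < s24 ∧ 0 < s31 ∧ 0 < s34 ∧ 0 < s41 ∧ 0 < s42)
    (s5 : Fin 4 → ℤ) (hs5 : ∀ i, 0 < s5 i)
    (s1 s2 s3 s4 : Fin 4 → ℤ)
    (hs1 : s1 = ![0, (s12 : ℤ), (s13 : ℤ), 0])
    (hs2 : s2 = ![0, 0, (s23 : ℤ), (s24 : ℤ)])
    (hs3 : s3 = ![(s31 : ℤ), 0, 0, (s34 : ℤ)])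
    (hs4 : s4 = ![(s41 : ℤ), (s42 : ℤ), 0, 0])
    (S : AddSubmonoid (Fin 4 → ℤ))
    (hS : S = AddSubmonoid.closure {s1, s2, s3, s4, s5}) :
    (paperSi S 0 ∩ paperSi S 2 ⊆ paperSi S 1 ∪ paperSi S 3) ∧
      (paperSi S 0 ∩ paperSi S 2) \ (paperSi S 1 ∪ paperSi S 3) = ∅ := by
  obtain ⟨-, h13, h23, -, h31, -, h41, -⟩ := hpos
  have hS' : S = AddSubmonoid.closure
      (Set.range (cyclicPairGens s12 s13 s23 s24 s31 s34 s41 s42 s5)) := by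
    simp only [hS, hs1, hs2, hs3, hs4, cyclicPairGens, Matrix.range_cons, Matrix.range_empty,
      Set.union_empty, Set.singleton_union]
  have key := cyclicPairGens.paperSi_zero_inter_two_subset hS' h13 h23 h31 h41 (hs5 0) (hs5 2)
  exact ⟨key, Set.sdiff_eq_empty.mpr key⟩
end

section
/- Let n1, n1', n2, n2', n3, n4, n5, m1, m2, m3, m3', m4, m4', m5 be natural numbers such that in ℤ^5 one has (n1 − n1')·s1 + (n2 − n2')·s2 + n3·s3 + n4·s4 + n5·s5 = m1·s1 + m2·s2 + (m3 − m3')·s3 + (m4 − m4')·s4 + m5·s5. Assume that s32 and s42 are not both zero, and that s14 and s24 are not both zero. Then the four integers n1 − n1', n2 − n2', m3 − m3', m4 − m4' cannot all be negative. (Claim 1 in the proof of Lemma 3.6, the case m = 5.) -/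
/-!
Coordinate 4 of the equation reads `(m1 - (n1 - n1')) s14 + (m2 - (n2 - n2')) s24 = (n5 - m5) s54`;
if `n1 - n1'` and `n2 - n2'` are negative the left side is positive, forcing `m5 < n5`.
Coordinate 2 reads `(n3 - (m3 - m3')) s32 + (n4 - (m4 - m4')) s42 + (n5 - m5) s52 = 0`;
if moreover `m3 - m3'` and `m4 - m4'` are negative, the left side is positive, a contradiction.
-/

theorem mul_add_mul_pos_of_not_both_zero {R : Type*} [Ring R] [LinearOrder R]
    [IsStrictOrderedRing R] {p q x y : R} (hp : 0 < p) (hq : 0 < q) (hx : 0 ≤ x) (hy : 0 ≤ y)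
    (hxy : ¬(x = 0 ∧ y = 0)) : 0 < p * x + q * y := by
  rcases hx.eq_or_lt with rfl | hx
  · have hy : 0 < y := hy.lt_of_ne fun h => hxy ⟨rfl, h.symm⟩
    simpa using mul_pos hq hy
  · exact add_pos_of_pos_of_nonneg (mul_pos hp hx) (mul_nonneg hq.le hy)

/-- Claim 1 in the proof of Lemma 3.6 (the case `m = 5`).

Generators in `ℤ^5` (Hochster-transformed form):
`s1 = (0, 0, s13, s14, s15)`, `s2 = (s21, 0, 0, s24, s25)`, `s3 = (s31, s32, 0, 0, s35)`,
`s4 = (s41, s42, s43, 0, 0)`, `s5 = (0, s52, s53, s54, 0)`.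
If
`(n1 − n1')·s1 + (n2 − n2')·s2 + n3·s3 + n4·s4 + n5·s5
  = m1·s1 + m2·s2 + (m3 − m3')·s3 + (m4 − m4')·s4 + m5·s5`,
`s32, s42` not both zero and `s14, s24` not both zero, then the four integers
`n1 − n1'`, `n2 − n2'`, `m3 − m3'`, `m4 − m4'` cannot all be negative. -/
theorem stmt3 (s13 s14 s15 s21 s24 s25 s31 s32 s35 s41 s42 s43 s52 s53 s54 : ℕ)
    (s1 s2 s3 s4 s5 : Fin 5 → ℤ)
    (hs1 : s1 = ![0, 0, (s13 : ℤ), (s14 : ℤ), (s15 : ℤ)])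
    (hs2 : s2 = ![(s21 : ℤ), 0, 0, (s24 : ℤ), (s25 : ℤ)])
    (hs3 : s3 = ![(s31 : ℤ), (s32 : ℤ), 0, 0, (s35 : ℤ)])
    (hs4 : s4 = ![(s41 : ℤ), (s42 : ℤ), (s43 : ℤ), 0, 0])
    (hs5 : s5 = ![0, (s52 : ℤ), (s53 : ℤ), (s54 : ℤ), 0])
    (h2 : ¬ (s32 = 0 ∧ s42 = 0)) (h4 : ¬ (s14 = 0 ∧ s24 = 0))
    (n1 n1' n2 n2' n3 n4 n5 m1 m2 m3 m3' m4 m4' m5 : ℕ)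
    (heq : ((n1 : ℤ) - (n1' : ℤ)) • s1 + ((n2 : ℤ) - (n2' : ℤ)) • s2 + (n3 : ℤ) • s3
            + (n4 : ℤ) • s4 + (n5 : ℤ) • s5
          = (m1 : ℤ) • s1 + (m2 : ℤ) • s2 + ((m3 : ℤ) - (m3' : ℤ)) • s3
            + ((m4 : ℤ) - (m4' : ℤ)) • s4 + (m5 : ℤ) • s5) :
    ¬ ((n1 : ℤ) - (n1' : ℤ) < 0 ∧ (n2 : ℤ) - (n2' : ℤ) < 0
        ∧ (m3 : ℤ) - (m3' : ℤ) < 0 ∧ (m4 : ℤ) - (m4' : ℤ) < 0) := by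
  rintro ⟨hn1, hn2, hm3, hm4⟩
  subst hs1 hs2 hs3 hs4 hs5
  have e1 := congrFun heq 1
  have e3 := congrFun heq 3
  simp only [Matrix.smul_cons, smul_eq_mul, mul_zero, Matrix.smul_empty, Matrix.add_cons,
    Matrix.head_cons, Matrix.tail_cons, zero_add, add_zero, Matrix.empty_add_empty,
    Matrix.cons_val] at e1 e3
  have hpos3 : 0 < ((m1 : ℤ) - (n1 - n1')) * s14 + ((m2 : ℤ) - (n2 - n2')) * s24 :=
    mul_add_mul_pos_of_not_both_zero (by omega) (by omega) (by positivity) (by positivity)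
      (by exact_mod_cast h4)
  have hm5 : (m5 : ℤ) < n5 :=
    sub_pos.mp (pos_of_mul_pos_left (by linarith : 0 < ((n5 : ℤ) - m5) * s54) (by positivity))
  have hpos1 : 0 < ((n3 : ℤ) - (m3 - m3')) * s32 + ((n4 : ℤ) - (m4 - m4')) * s42 :=
    mul_add_mul_pos_of_not_both_zero (by omega) (by omega) (by positivity) (by positivity)
      (by exact_mod_cast h2)
  linarith [mul_nonneg (sub_nonneg.mpr hm5.le) (Int.natCast_nonneg s52)]
end

section
/- Let n1, n1', n2, n2', n3, n4, n5, m1, m2, m3, m3', m4, m4', m5 be natural numbers such that in ℤ^5 one has (n1 − n1')·s1 + (n2 − n2')·s2 + n3·s3 + n4·s4 + n5·s5 = m1·s1 + m2·s2 + (m3 − m3')·s3 + (m4 − m4')·s4 + m5·s5. Assume that s32 and s42 are not both zero, that s14 and s24 are not both zero, and that s15 and s25 are not both zero. Then it is impossible that simultaneously n1 < n1', n2 < n2', m3 ≥ m3' and m4 < m4'. (Claim 4 in the proof of Lemma 3.6, the case m = 5.) -/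
/-!
Read off three coordinates of the equation. In coordinates 4 and 5, only `s1, s2` and one
further generator have a nonzero entry there, and `s1, s2` enter with the positive coefficients
`m1 + n1' - n1` and `m2 + n2' - n2`; this forces `n5 > m5` (from `s54`) and
`n3 > m3 - m3'` (from `s35`). In coordinate 2 the generators `s3, s4` then enter with positive
coefficients `n3 - (m3 - m3')` and `n4 - (m4 - m4')`, balanced by `(m5 - n5) s52 ≤ 0`,
which is impossible.
-/

theorem pos_of_mul_add_mul_eq_mul {R : Type*} [Ring R] [LinearOrder R] [IsStrictOrderedRing R]
    {a b c x y z : R} (ha : 0 < a) (hb : 0 < b) (hx : 0 ≤ x) (hy : 0 ≤ y)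
    (hxy : ¬ (x = 0 ∧ y = 0)) (hz : 0 ≤ z) (h : a * x + b * y = c * z) : 0 < c := by
  have hsum : 0 < a * x + b * y := by
    rcases not_and_or.mp hxy with hx0 | hy0
    · exact add_pos_of_pos_of_nonneg (mul_pos ha (lt_of_le_of_ne hx (Ne.symm hx0)))
        (mul_nonneg hb.le hy)
    · exact add_pos_of_nonneg_of_pos (mul_nonneg ha.le hx)
        (mul_pos hb (lt_of_le_of_ne hy (Ne.symm hy0)))
  exact pos_of_mul_pos_left (h ▸ hsum) hz

/-- Claim 4 in the proof of Lemma 3.6 (the case `m = 5`).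

With the same generators and the same equation as in Claim 1, and assuming additionally
that `s15, s25` are not both zero, it is impossible that simultaneously
`n1 < n1'`, `n2 < n2'`, `m3 ≥ m3'` and `m4 < m4'`. -/
theorem stmt4 (s13 s14 s15 s21 s24 s25 s31 s32 s35 s41 s42 s43 s52 s53 s54 : ℕ)
    (s1 s2 s3 s4 s5 : Fin 5 → ℤ)
    (hs1 : s1 = ![0, 0, (s13 : ℤ), (s14 : ℤ), (s15 : ℤ)])
    (hs2 : s2 = ![(s21 : ℤ), 0, 0, (s24 : ℤ), (s25 : ℤ)])
    (hs3 : s3 = ![(s31 : ℤ), (s32 : ℤ), 0, 0, (s35 : ℤ)])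
    (hs4 : s4 = ![(s41 : ℤ), (s42 : ℤ), (s43 : ℤ), 0, 0])
    (hs5 : s5 = ![0, (s52 : ℤ), (s53 : ℤ), (s54 : ℤ), 0])
    (h2 : ¬ (s32 = 0 ∧ s42 = 0)) (h4 : ¬ (s14 = 0 ∧ s24 = 0))
    (h5 : ¬ (s15 = 0 ∧ s25 = 0))
    (n1 n1' n2 n2' n3 n4 n5 m1 m2 m3 m3' m4 m4' m5 : ℕ)
    (heq : ((n1 : ℤ) - (n1' : ℤ)) • s1 + ((n2 : ℤ) - (n2' : ℤ)) • s2 + (n3 : ℤ) • s3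
            + (n4 : ℤ) • s4 + (n5 : ℤ) • s5
          = (m1 : ℤ) • s1 + (m2 : ℤ) • s2 + ((m3 : ℤ) - (m3' : ℤ)) • s3
            + ((m4 : ℤ) - (m4' : ℤ)) • s4 + (m5 : ℤ) • s5) :
    ¬ (n1 < n1' ∧ n2 < n2' ∧ m3' ≤ m3 ∧ m4 < m4') := by
  rintro ⟨hn1, hn2, -, hm4⟩
  subst hs1 hs2 hs3 hs4 hs5
  have e2 := congrFun heq 1
  have e4 := congrFun heq 3
  have e5 := congrFun heq 4
  simp only [Pi.add_apply, Pi.smul_apply, smul_eq_mul, Matrix.cons_val, mul_zero,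
    add_zero, zero_add] at e2 e4 e5
  have hc1 : (0 : ℤ) < m1 + n1' - n1 := by omega
  have hc2 : (0 : ℤ) < m2 + n2' - n2 := by omega
  have hn5 : (0 : ℤ) < n5 - m5 :=
    pos_of_mul_add_mul_eq_mul hc1 hc2 (Nat.cast_nonneg _) (Nat.cast_nonneg _)
      (by exact_mod_cast h4) (Nat.cast_nonneg s54) (by linear_combination -e4)
  have hn3 : (0 : ℤ) < n3 - (m3 - m3') :=
    pos_of_mul_add_mul_eq_mul hc1 hc2 (Nat.cast_nonneg _) (Nat.cast_nonneg _)
      (by exact_mod_cast h5) (Nat.cast_nonneg s35) (by linear_combination -e5)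
  have hm5 : (0 : ℤ) < m5 - n5 :=
    pos_of_mul_add_mul_eq_mul hn3 (by omega : (0 : ℤ) < n4 - (m4 - m4')) (Nat.cast_nonneg _)
      (Nat.cast_nonneg _) (by exact_mod_cast h2) (Nat.cast_nonneg s52) (by linear_combination e2)
  omega
end

section
/- Let S be a finitely generated submonoid of ℕ^n and let G ⊆ ℤ^n be the subgroup generated by S. Then there exist a natural number m and a ℤ-linear map L : ℤ^n → ℤ^m such that: (1) L is injective on G, so that L restricts to an additive monoid isomorphism from S onto L(S); (2) L(S) ⊆ ℕ^m; and (3) for every x ∈ G, L(x) ∈ ℕ^m if and only if k·x ∈ S for some integer k ≥ 1 (that is, L(G) ∩ ℕ^m equals the saturation of L(S) in L(G), so that L(S) becomes a standard affine semigroup). (The Hochster transform lemma of Section 2.) -/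
/-!
The rational cone spanned by the generators of `S` is finitely generated, so by the
Minkowski–Weyl theorem (a consequence of Fourier–Motzkin elimination) it is cut out by finitely many
linear inequalities, which become integral after clearing denominators. An integer vector lies in
this cone iff some positive multiple of it lies in `S`. Together with the coordinate functions,
which make `L` injective and are nonnegative on `S`, these inequalities are the coordinates of `L`.
-/

theorem Finset.exists_between_of_forall_le {α β γ : Type*} [LinearOrder γ] [Nonempty γ]
    {s : Finset α} {t : Finset β} {f : α → γ} {g : β → γ} (h : ∀ a ∈ s, ∀ b ∈ t, f a ≤ g b) :
    ∃ c, (∀ a ∈ s, f a ≤ c) ∧ ∀ b ∈ t, c ≤ g b := by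
  rcases t.eq_empty_or_nonempty with rfl | ht
  · obtain ⟨c, hc⟩ := (s.image f).exists_le
    exact ⟨c, fun a ha => hc _ (mem_image_of_mem f ha), by simp⟩
  · obtain ⟨b, hb, hmin⟩ := t.exists_min_image g ht
    exact ⟨g b, fun a ha => h a ha b hb, hmin⟩

lemma LinearMap.apply_eq_mul_add_comp_inr {R M : Type*} [CommSemiring R] [AddCommMonoid M]
    [Module R M] (φ : Module.Dual R (R × M)) (t : R) (w : M) :
    φ (t, w) = t * φ (1, 0) + (φ ∘ₗ .inr R R M) w := by
  rw [← smul_eq_mul, ← map_smul, LinearMap.comp_apply, LinearMap.inr_apply, ← map_add]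
  simp

namespace PointedCone

variable {𝕜 M N : Type*} [Field 𝕜] [LinearOrder 𝕜] [AddCommGroup M] [Module 𝕜 M]
  [AddCommGroup N] [Module 𝕜 N]

/-- The constraints on `w` obtained from the constraints `Φ` on `(t, w)` by eliminating `t`:
those not involving `t`, and a positive combination cancelling `t` for each pair of constraints
bounding `t` from below and from above. -/
def eliminateFst (Φ : Set (Module.Dual 𝕜 (𝕜 × M))) : Set (Module.Dual 𝕜 M) :=
  (fun φ => φ ∘ₗ .inr 𝕜 𝕜 M) '' {φ ∈ Φ | φ (1, 0) = 0} ∪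
    Set.image2 (fun p q => p (1, 0) • (q ∘ₗ .inr 𝕜 𝕜 M) - q (1, 0) • (p ∘ₗ .inr 𝕜 𝕜 M))
      {p ∈ Φ | 0 < p (1, 0)} {q ∈ Φ | q (1, 0) < 0}

lemma finite_eliminateFst {Φ : Set (Module.Dual 𝕜 (𝕜 × M))} (hΦ : Φ.Finite) :
    (eliminateFst Φ).Finite :=
  ((hΦ.sep _).image _).union (.image2 _ (hΦ.sep _) (hΦ.sep _))

variable [IsStrictOrderedRing 𝕜]

lemma mem_dual_id {s : Set (Module.Dual 𝕜 M)} {x : M} :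
    x ∈ dual .id s ↔ ∀ φ ∈ s, 0 ≤ φ x := .rfl

lemma nonneg_eliminateFst_of_nonneg {Φ : Set (Module.Dual 𝕜 (𝕜 × M))} {t : 𝕜} {w : M}
    (h : ∀ φ ∈ Φ, 0 ≤ φ (t, w)) : ∀ ψ ∈ eliminateFst Φ, 0 ≤ ψ w := by
  rintro ψ (⟨φ, ⟨hφ, h0⟩, rfl⟩ | ⟨p, ⟨hp, hp0⟩, q, ⟨hq, hq0⟩, rfl⟩)
  · simpa [φ.apply_eq_mul_add_comp_inr t, h0] using h φ hφ
  · have hpt := h p hp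
    have hqt := h q hq
    rw [LinearMap.apply_eq_mul_add_comp_inr] at hpt hqt
    simp only [LinearMap.sub_apply, LinearMap.smul_apply, smul_eq_mul]
    nlinarith

lemma exists_nonneg_of_nonneg_eliminateFst {Φ : Finset (Module.Dual 𝕜 (𝕜 × M))} {w : M}
    (h : ∀ ψ ∈ eliminateFst (Φ : Set (Module.Dual 𝕜 (𝕜 × M))), 0 ≤ ψ w) :
    ∃ t, ∀ φ ∈ Φ, 0 ≤ φ (t, w) := by
  set r : Module.Dual 𝕜 (𝕜 × M) → 𝕜 := fun φ => (φ ∘ₗ .inr 𝕜 𝕜 M) w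
  have hzero : ∀ φ ∈ Φ, φ (1, 0) = 0 → 0 ≤ r φ := fun φ hφ h0 =>
    h _ (Or.inl ⟨φ, ⟨hφ, h0⟩, rfl⟩)
  have hpair : ∀ p ∈ Φ, 0 < p (1, 0) → ∀ q ∈ Φ, q (1, 0) < 0 →
      0 ≤ p (1, 0) * r q - q (1, 0) * r p := fun p hp hp0 q hq hq0 =>
    h _ (Or.inr ⟨p, ⟨hp, hp0⟩, q, ⟨hq, hq0⟩, rfl⟩)
  obtain ⟨t, hlo, hhi⟩ := Finset.exists_between_of_forall_le
    (s := Φ.filter (0 < · (1, 0))) (t := Φ.filter (· (1, 0) < 0))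
    (f := fun p => -r p / p (1, 0)) (g := fun q => r q / -q (1, 0)) (by
      simp only [Finset.mem_filter, and_imp]
      intro p hp hp0 q hq hq0
      rw [div_le_div_iff₀ hp0 (neg_pos.2 hq0)]
      linarith [hpair p hp hp0 q hq hq0])
  simp only [Finset.mem_filter, and_imp] at hlo hhi
  refine ⟨t, fun φ hφ => ?_⟩
  rw [φ.apply_eq_mul_add_comp_inr]
  rcases lt_trichotomy (φ (1, 0)) 0 with hneg | h0 | hpos
  · have := (le_div_iff₀ (neg_pos.2 hneg)).1 (hhi φ hφ hneg)
    linarith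
  · rw [h0, mul_zero, zero_add]
    exact hzero φ hφ h0
  · have := (div_le_iff₀ hpos).1 (hlo φ hφ hpos)
    linarith

lemma map_snd_dual_eq_dual_eliminateFst (Φ : Finset (Module.Dual 𝕜 (𝕜 × M))) :
    (dual .id (Φ : Set (Module.Dual 𝕜 (𝕜 × M)))).map (.snd 𝕜 𝕜 M) =
      dual .id (eliminateFst (Φ : Set (Module.Dual 𝕜 (𝕜 × M)))) := by
  ext w
  simp only [mem_map, mem_dual_id, Prod.exists, LinearMap.snd_apply, exists_eq_right,
    Finset.mem_coe]
  exact ⟨fun ⟨_, ht⟩ => nonneg_eliminateFst_of_nonneg ht, exists_nonneg_of_nonneg_eliminateFst⟩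

lemma DualFG.comap {C : PointedCone 𝕜 N} (hC : C.DualFG .id) (f : M →ₗ[𝕜] N) :
    (C.comap f).DualFG .id := by
  classical
  obtain ⟨s, rfl⟩ := hC
  refine ⟨s.image (·.comp f), ?_⟩
  ext x
  simp

lemma DualFG.map_linearEquiv {C : PointedCone 𝕜 M} (hC : C.DualFG .id) (e : M ≃ₗ[𝕜] N) :
    (C.map (e : M →ₗ[𝕜] N)).DualFG .id := by
  convert hC.comap (e.symm : N →ₗ[𝕜] M) using 1
  ext x
  simp only [mem_map, mem_comap, LinearEquiv.coe_coe]
  exact ⟨fun ⟨y, hy, hyx⟩ => by simpa [← hyx] using hy, fun h => ⟨_, h, e.apply_symm_apply x⟩⟩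

lemma DualFG.map_snd {C : PointedCone 𝕜 (𝕜 × M)} (hC : C.DualFG .id) :
    (C.map (.snd 𝕜 𝕜 M)).DualFG .id := by
  obtain ⟨Φ, rfl⟩ := hC
  rw [map_snd_dual_eq_dual_eliminateFst]
  exact .dual_of_finite _ (finite_eliminateFst Φ.finite_toSet)

lemma DualFG.map_snd_fin {r : ℕ} {C : PointedCone 𝕜 ((Fin r → 𝕜) × M)} (hC : C.DualFG .id) :
    (C.map (.snd _ _ M)).DualFG .id := by
  induction r with
  | zero =>
    exact hC.map_linearEquiv (LinearEquiv.uniqueProd (R := 𝕜))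
  | succ r ih =>
    let e := ((Fin.consLinearEquiv 𝕜 (n := r) fun _ => 𝕜).symm.prodCongr (.refl 𝕜 M)) ≪≫ₗ
      .prodAssoc 𝕜 _ _ _
    have h := ih (hC.map_linearEquiv e).map_snd
    rwa [map_map, map_map] at h

lemma DualFG.map_snd_pi {κ : Type*} [Finite κ] {C : PointedCone 𝕜 ((κ → 𝕜) × M)}
    (hC : C.DualFG .id) : (C.map (.snd _ _ M)).DualFG .id := by
  obtain ⟨r, ⟨σ⟩⟩ := Finite.exists_equiv_fin κ
  have h := (hC.map_linearEquiv ((LinearEquiv.funCongrLeft 𝕜 𝕜 σ.symm).prodCongr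
    (.refl 𝕜 M))).map_snd_fin
  rwa [map_map] at h

variable (𝕜) in
lemma dualFG_positive_pi (ι : Type*) [Finite ι] : (positive 𝕜 (ι → 𝕜)).DualFG .id := by
  convert DualFG.dual_of_finite .id (Set.finite_range (Pi.basisFun 𝕜 ι).coord) using 1
  ext x
  simp [Pi.le_def]

variable (𝕜) in
lemma dualFG_bot_pi (ι : Type*) [Finite ι] : (⊥ : PointedCone 𝕜 (ι → 𝕜)).DualFG .id := by
  convert (dualFG_positive_pi 𝕜 ι).inf ((dualFG_positive_pi 𝕜 ι).comap (-LinearMap.id)) using 1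
  ext x
  simp [le_antisymm_iff, and_comm]

lemma DualFG.map {κ ι : Type*} [Finite κ] [Finite ι] {C : PointedCone 𝕜 (κ → 𝕜)}
    (hC : C.DualFG .id) (f : (κ → 𝕜) →ₗ[𝕜] (ι → 𝕜)) : (C.map f).DualFG .id := by
  have hgraph := (hC.comap (.fst 𝕜 (κ → 𝕜) (ι → 𝕜))).inf ((dualFG_bot_pi 𝕜 ι).comap
    (f ∘ₗ .fst 𝕜 (κ → 𝕜) (ι → 𝕜) - .snd 𝕜 (κ → 𝕜) (ι → 𝕜)))
  convert hgraph.map_snd_pi using 1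
  ext x
  simp [sub_eq_zero]

end PointedCone

lemma Rat.exists_pos_nat_mul_eq_intCast {κ : Type*} [Finite κ] (q : κ → ℚ) :
    ∃ N : ℕ, 0 < N ∧ ∀ i, ∃ z : ℤ, (z : ℚ) = N * q i := by
  obtain ⟨⟨b, hb⟩, hbq⟩ := IsLocalization.exist_integer_multiples_of_finite (nonZeroDivisors ℤ) q
  refine ⟨b.natAbs, Int.natAbs_pos.2 (nonZeroDivisors.ne_zero hb), fun i => ?_⟩
  obtain ⟨z, hz⟩ := hbq i
  have hz' : (z : ℚ) = b * q i := by simpa [zsmul_eq_mul] using hz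
  rw [Nat.cast_natAbs, Int.cast_abs]
  rcases abs_choice (b : ℚ) with h | h
  · exact ⟨z, by rw [h, hz']⟩
  · exact ⟨-z, by rw [h, Int.cast_neg, hz', neg_mul]⟩

lemma Module.Dual.exists_intDual_nonneg_iff {ι : Type*} [Fintype ι]
    (ψ : Module.Dual ℚ (ι → ℚ)) :
    ∃ ψ' : Module.Dual ℤ (ι → ℤ), ∀ v, 0 ≤ ψ' v ↔ 0 ≤ ψ (Int.cast ∘ v) := by
  classical
  obtain ⟨N, hN, hz⟩ := Rat.exists_pos_nat_mul_eq_intCast fun i => ψ fun j => if i = j then 1 else 0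
  choose z hz using hz
  refine ⟨Fintype.linearCombination ℤ z, fun v => ?_⟩
  have hscale : ((Fintype.linearCombination ℤ z v : ℤ) : ℚ) = N * ψ (Int.cast ∘ v) := by
    rw [ψ.pi_apply_eq_sum_univ, Finset.mul_sum, Fintype.linearCombination_apply]
    push_cast
    simp only [smul_eq_mul, Int.cast_mul, Function.comp_apply, hz]
    exact Finset.sum_congr rfl fun i _ => by ring
  rw [← Rat.intCast_nonneg, hscale, mul_nonneg_iff_of_pos_left (by exact_mod_cast hN)]

lemma AddSubmonoid.exists_nsmul_mem_closure_iff {ι : Type*} {s : Set (ι → ℤ)} [Fintype s]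
    (x : ι → ℤ) :
    (∃ k : ℕ, 1 ≤ k ∧ k • x ∈ AddSubmonoid.closure s) ↔
      (Int.cast ∘ x : ι → ℚ) ∈ (PointedCone.positive ℚ (s → ℚ)).map
        (Fintype.linearCombination ℚ fun v : s => Int.cast ∘ (v : ι → ℤ)) := by
  let cast : (ι → ℤ) →+ (ι → ℚ) := (Int.castAddHom ℚ).compLeft ι
  have hcast : Function.Injective cast := Int.cast_injective.comp_left
  have hcast_apply (y : ι → ℤ) : cast y = Int.cast ∘ y := rfl
  simp only [AddSubmonoid.mem_closure_iff_of_fintype, PointedCone.mem_map,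
    PointedCone.mem_positive, Fintype.linearCombination_apply]
  constructor
  · rintro ⟨k, hk, a, hka⟩
    have hsum : (k : ℚ) • (Int.cast ∘ x : ι → ℚ) = ∑ v, (a v : ℚ) • (Int.cast ∘ (v : ι → ℤ)) := by
      have := congrArg cast hka
      simp only [map_nsmul, map_sum] at this
      simpa only [hcast_apply, Nat.cast_smul_eq_nsmul] using this
    refine ⟨fun v => (k : ℚ)⁻¹ * a v, fun v => by positivity, ?_⟩
    simp only [mul_smul, ← Finset.smul_sum, ← hsum]
    exact inv_smul_smul₀ (by positivity) _
  · rintro ⟨c, hc, hcx⟩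
    obtain ⟨N, hN, hz⟩ := Rat.exists_pos_nat_mul_eq_intCast c
    choose z hz using hz
    have hz_nonneg (v : s) : 0 ≤ z v := by
      have : (0 : ℚ) ≤ z v := hz v ▸ mul_nonneg (by positivity) (hc v)
      exact_mod_cast this
    refine ⟨N, hN, fun v => (z v).toNat, hcast ?_⟩
    simp only [map_nsmul, map_sum]
    simp only [hcast_apply, ← Nat.cast_smul_eq_nsmul ℚ, ← hcx, Finset.smul_sum, smul_smul]
    refine Finset.sum_congr rfl fun v _ => ?_
    rw [← hz v, ← Int.cast_natCast, Int.toNat_of_nonneg (hz_nonneg v)]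

theorem AddSubmonoid.FG.exists_finset_forall_nonneg_iff {ι : Type*} [Fintype ι]
    {S : AddSubmonoid (ι → ℤ)} (hS : S.FG) :
    ∃ F : Finset (Module.Dual ℤ (ι → ℤ)),
      ∀ x, (∀ f ∈ F, 0 ≤ f x) ↔ ∃ k : ℕ, 1 ≤ k ∧ k • x ∈ S := by
  classical
  obtain ⟨T, rfl⟩ := hS
  obtain ⟨Ψ, hΨ⟩ := (PointedCone.dualFG_positive_pi ℚ (T : Set (ι → ℤ))).map
    (Fintype.linearCombination ℚ fun v : (T : Set (ι → ℤ)) => Int.cast ∘ (v : ι → ℤ))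
  choose ψ' hψ' using Module.Dual.exists_intDual_nonneg_iff (ι := ι)
  refine ⟨Ψ.image ψ', fun x => ?_⟩
  rw [AddSubmonoid.exists_nsmul_mem_closure_iff, ← hΨ, PointedCone.mem_dual_id]
  simp [hψ']

theorem stmt8_general (n : ℕ) (S : AddSubmonoid (Fin n → ℤ))
    (hSnonneg : ∀ x ∈ S, ∀ i, 0 ≤ x i) (hSfg : S.FG)
    (G : AddSubgroup (Fin n → ℤ)) :
    ∃ (m : ℕ) (L : (Fin n → ℤ) →ₗ[ℤ] (Fin m → ℤ)),
      (∀ x ∈ G, ∀ y ∈ G, L x = L y → x = y) ∧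
      (∀ s ∈ S, ∀ i, 0 ≤ L s i) ∧
      (∀ x ∈ G, ((∀ i, 0 ≤ L x i) ↔ ∃ k : ℕ, 1 ≤ k ∧ (k : ℕ) • x ∈ S)) := by
  obtain ⟨F, hF⟩ := hSfg.exists_finset_forall_nonneg_iff
  let L₀ : (Fin n → ℤ) →ₗ[ℤ] (Fin n ⊕ F → ℤ) :=
    LinearMap.pi (Sum.elim LinearMap.proj fun f => f.1)
  let e := Fintype.equivFin (Fin n ⊕ F)
  let L := (LinearEquiv.funCongrLeft ℤ ℤ e.symm).toLinearMap ∘ₗ L₀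
  have hL (x) (j) : L x (e j) = L₀ x j := by simp [L]
  have hL_nonneg (x) : (∀ i, 0 ≤ L x i) ↔ ∃ k : ℕ, 1 ≤ k ∧ k • x ∈ S := by
    rw [← e.forall_congr_right]
    simp only [hL, Sum.forall, L₀, LinearMap.pi_apply, Sum.elim_inl, Sum.elim_inr,
      LinearMap.proj_apply, Subtype.forall, ← hF x]
    refine and_iff_right_of_imp fun hx i => ?_
    obtain ⟨k, hk, hkx⟩ := (hF x).1 hx
    have := hSnonneg _ hkx i
    rw [Pi.smul_apply, nsmul_eq_mul] at this
    exact nonneg_of_mul_nonneg_right this (by positivity)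
  refine ⟨_, L, fun x _ y _ hxy => funext fun i => ?_,
    fun s hs => (hL_nonneg s).2 ⟨1, le_rfl, by simpa⟩, fun x _ => hL_nonneg x⟩
  simpa [hL, L₀] using congr_fun hxy (e (.inl i))

/-- The Hochster transform lemma of Section 2. Let `S` be a finitely generated
submonoid of `ℕ^n` (realized as a finitely generated additive submonoid of `ℤ^n`
all of whose elements have nonnegative coordinates) and let `G ⊆ ℤ^n` be the
subgroup generated by `S`. Then there are `m : ℕ` and a `ℤ`-linear map
`L : ℤ^n → ℤ^m` such that: (1) `L` is injective on `G` (hence restricts to an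
additive monoid isomorphism of `S` onto `L(S)`); (2) `L(S) ⊆ ℕ^m`; and
(3) for every `x ∈ G`, `L(x) ∈ ℕ^m` iff `k·x ∈ S` for some integer `k ≥ 1`
(so `L(G) ∩ ℕ^m` is the saturation of `L(S)` in `L(G)`, i.e. `L(S)` is a
standard affine semigroup). -/
theorem stmt8 (n : ℕ) (S : AddSubmonoid (Fin n → ℤ))
    (hSnonneg : ∀ x ∈ S, ∀ i, 0 ≤ x i) (hSfg : S.FG)
    (G : AddSubgroup (Fin n → ℤ)) (hG : G = AddSubgroup.closure (S : Set (Fin n → ℤ))) :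
    ∃ (m : ℕ) (L : (Fin n → ℤ) →ₗ[ℤ] (Fin m → ℤ)),
      (∀ x ∈ G, ∀ y ∈ G, L x = L y → x = y) ∧
      (∀ s ∈ S, ∀ i, 0 ≤ L s i) ∧
      (∀ x ∈ G, ((∀ i, 0 ≤ L x i) ↔ ∃ k : ℕ, 1 ≤ k ∧ (k : ℕ) • x ∈ S)) :=
  stmt8_general n S hSnonneg hSfg G
end
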